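/- Let V be a Gel'fand–Dorfman bialgebra over ℂ and let α_0, α_1, α_2, α_3 : V×V → ℂ be bilinear forms forming a central-extension cocycle (with n = 3), i.e. satisfying condition (S) and condition (C). Then the identities (I1)–(I8) hold for all a, b, c ∈ V. -/
import Mathlib


/-- The polynomial `α_λ(a,b) = α_0(a,b) + λ α_1(a,b) + λ² α_2(a,b) + λ³ α_3(a,b)`
evaluated at `l : ℂ`. -/
noncomputable def cocPoly {V : Type*} [AddCommGroup V] [Module ℂ V]
    (α0 α1 α2 α3 : V →ₗ[ℂ] V →ₗ[ℂ] ℂ) (l : ℂ) (a b : V) : ℂ :=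
  α0 a b + l * α1 a b + l ^ 2 * α2 a b + l ^ 3 * α3 a b

set_option maxHeartbeats 4000000 in
/-- Let `(V, ∘, [·,·])` be a Gel'fand–Dorfman bialgebra over `ℂ` and
`α_0, α_1, α_2, α_3` bilinear forms forming a central-extension cocycle (with `n = 3`),
i.e. satisfying (S) and (C).  Then the identities (I1)–(I8) hold for all `a, b, c ∈ V`. -/
theorem stmt_1 {V : Type*} [AddCommGroup V] [Module ℂ V]
    (circ br : V →ₗ[ℂ] V →ₗ[ℂ] V)
    -- Novikov algebra axioms for `∘ = circ`
    (hNov1 : ∀ a b c : V, circ (circ a b) c - circ a (circ b c)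
      = circ (circ b a) c - circ b (circ a c))
    (hNov2 : ∀ a b c : V, circ (circ a b) c = circ (circ a c) b)
    -- Lie algebra axioms for `[·,·] = br`
    (hSkew : ∀ a b : V, br a b = - br b a)
    (hJacobi : ∀ a b c : V, br (br a b) c + br (br b c) a + br (br c a) b = 0)
    -- compatibility condition of the Gel'fand–Dorfman bialgebra
    (hCompat : ∀ a b c : V, br (circ a b) c - br (circ a c) b + circ (br a b) c
      - circ (br a c) b - circ a (br b c) = 0)
    (α0 α1 α2 α3 : V →ₗ[ℂ] V →ₗ[ℂ] ℂ)
    -- condition (S): `α_λ(a,b) = −α_{−λ}(b,a)`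
    (hS : ∀ (a b : V) (l : ℂ),
      cocPoly α0 α1 α2 α3 l a b = - cocPoly α0 α1 α2 α3 (-l) b a)
    -- condition (C)
    (hC : ∀ (a b c : V) (l m : ℂ),
      l * cocPoly α0 α1 α2 α3 l a (circ c b)
        + m * cocPoly α0 α1 α2 α3 l a (circ b c + circ c b)
        + cocPoly α0 α1 α2 α3 l a (br c b)
        - m * cocPoly α0 α1 α2 α3 m b (circ c a)
        - l * cocPoly α0 α1 α2 α3 m b (circ a c + circ c a)
        - cocPoly α0 α1 α2 α3 m b (br c a)
      = (-l - m) * cocPoly α0 α1 α2 α3 (l + m) (circ b a) c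
        + l * cocPoly α0 α1 α2 α3 (l + m) (circ a b + circ b a) c
        + cocPoly α0 α1 α2 α3 (l + m) (br b a) c) :
    -- (I1): `α_i(a,b) = (−1)^{i+1} α_i(b,a)` for `i = 0, 1, 2, 3`
    (∀ a b : V, α0 a b = - α0 b a)
    ∧ (∀ a b : V, α1 a b = α1 b a)
    ∧ (∀ a b : V, α2 a b = - α2 b a)
    ∧ (∀ a b : V, α3 a b = α3 b a)
    -- (I2)
    ∧ (∀ a b c : V, α3 a (circ c b) = α3 (circ a b) c ∧ α3 (circ a b) c = α3 (circ b a) c)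
    -- (I3)
    ∧ (∀ a b c : V, α2 a (circ c b) + α3 a (br c b) = α2 (circ a b) c + α3 (br b a) c)
    -- (I4)
    ∧ (∀ a b c : V, α2 a (circ b c + circ c b) + α2 (circ b a) c
        = 2 * α2 (circ a b) c + 3 * α3 (br b a) c)
    -- (I5)
    ∧ (∀ a b c : V, α1 a (circ c b) + α2 a (br c b) = α1 (circ a b) c + α2 (br b a) c)
    -- (I6)
    ∧ (∀ a b c : V, α1 a (circ b c + circ c b) - α1 b (circ a c + circ c a)
        = - α1 (circ b a) c + α1 (circ a b) c + 2 * α2 (br b a) c)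
    -- (I7)
    ∧ (∀ a b c : V, α0 a (circ c b) + α1 a (br c b) - α0 b (circ a c + circ c a)
        = α0 (circ a b) c + α1 (br b a) c)
    -- (I8)
    ∧ (∀ a b c : V, α0 a (br c b) - α0 b (br c a) = α0 (br b a) c) := by
  refine ⟨?_, ?_, ?_, ?_, ?_, ?_, ?_, ?_, ?_, ?_, ?_⟩
  · intro a b
    have hs0 := hS a b (0 : ℂ)
    simp only [cocPoly, map_add, LinearMap.add_apply, map_neg, LinearMap.neg_apply] at hs0
    linear_combination (1 : ℂ) * hs0
  · intro a b
    have hs0 := hS a b (0 : ℂ)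
    have hs1 := hS a b (1 : ℂ)
    have hs2 := hS a b (2 : ℂ)
    have hs3 := hS a b (3 : ℂ)
    simp only [cocPoly, map_add, LinearMap.add_apply, map_neg, LinearMap.neg_apply] at hs0 hs1 hs2 hs3
    linear_combination (-11/6 : ℂ) * hs0 + (3 : ℂ) * hs1 + (-3/2 : ℂ) * hs2 + (1/3 : ℂ) * hs3
  · intro a b
    have hs0 := hS a b (0 : ℂ)
    have hs1 := hS a b (1 : ℂ)
    have hs2 := hS a b (2 : ℂ)
    have hs3 := hS a b (3 : ℂ)
    simp only [cocPoly, map_add, LinearMap.add_apply, map_neg, LinearMap.neg_apply] at hs0 hs1 hs2 hs3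
    linear_combination (1 : ℂ) * hs0 + (-5/2 : ℂ) * hs1 + (2 : ℂ) * hs2 + (-1/2 : ℂ) * hs3
  · intro a b
    have hs0 := hS a b (0 : ℂ)
    have hs1 := hS a b (1 : ℂ)
    have hs2 := hS a b (2 : ℂ)
    have hs3 := hS a b (3 : ℂ)
    simp only [cocPoly, map_add, LinearMap.add_apply, map_neg, LinearMap.neg_apply] at hs0 hs1 hs2 hs3
    linear_combination (-1/6 : ℂ) * hs0 + (1/2 : ℂ) * hs1 + (-1/2 : ℂ) * hs2 + (1/6 : ℂ) * hs3
  · intro a b c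
    refine ⟨?_, ?_⟩
    · have h00 := hC a b c 0 0
      have h10 := hC a b c 1 0
      have h20 := hC a b c 2 0
      have h30 := hC a b c 3 0
      have h40 := hC a b c 4 0
      simp only [cocPoly, map_add, LinearMap.add_apply] at h00 h10 h20 h30 h40
      linear_combination (1/24 : ℂ) * h00 + (-1/6 : ℂ) * h10 + (1/4 : ℂ) * h20 + (-1/6 : ℂ) * h30 + (1/24 : ℂ) * h40
    · have h00 := hC a b c 0 0
      have h01 := hC a b c 0 1
      have h02 := hC a b c 0 2
      have h03 := hC a b c 0 3
      have h04 := hC a b c 0 4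
      have h10 := hC a b c 1 0
      have h11 := hC a b c 1 1
      have h12 := hC a b c 1 2
      have h13 := hC a b c 1 3
      have h14 := hC a b c 1 4
      have h20 := hC a b c 2 0
      have h21 := hC a b c 2 1
      have h22 := hC a b c 2 2
      have h23 := hC a b c 2 3
      have h24 := hC a b c 2 4
      have h30 := hC a b c 3 0
      have h31 := hC a b c 3 1
      have h32 := hC a b c 3 2
      have h33 := hC a b c 3 3
      have h34 := hC a b c 3 4
      have h40 := hC a b c 4 0
      have h41 := hC a b c 4 1
      have h42 := hC a b c 4 2
      have h43 := hC a b c 4 3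
      have h44 := hC a b c 4 4
      simp only [cocPoly, map_add, LinearMap.add_apply] at h00 h01 h02 h03 h04 h10 h11 h12 h13 h14 h20 h21 h22 h23 h24 h30 h31 h32 h33 h34 h40 h41 h42 h43 h44
      linear_combination (-1225/1728 : ℂ) * h00 + (455/216 : ℂ) * h01 + (-665/288 : ℂ) * h02 + (245/216 : ℂ) * h03 + (-385/1728 : ℂ) * h04 + (455/216 : ℂ) * h10 + (-169/27 : ℂ) * h11 + (247/36 : ℂ) * h12 + (-91/27 : ℂ) * h13 + (143/216 : ℂ) * h14 + (-665/288 : ℂ) * h20 + (247/36 : ℂ) * h21 + (-361/48 : ℂ) * h22 + (133/36 : ℂ) * h23 + (-209/288 : ℂ) * h24 + (245/216 : ℂ) * h30 + (-91/27 : ℂ) * h31 + (133/36 : ℂ) * h32 + (-49/27 : ℂ) * h33 + (77/216 : ℂ) * h34 + (-385/1728 : ℂ) * h40 + (143/216 : ℂ) * h41 + (-209/288 : ℂ) * h42 + (77/216 : ℂ) * h43 + (-121/1728 : ℂ) * h44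
  · intro a b c
    have h00 := hC a b c 0 0
    have h10 := hC a b c 1 0
    have h20 := hC a b c 2 0
    have h30 := hC a b c 3 0
    have h40 := hC a b c 4 0
    simp only [cocPoly, map_add, LinearMap.add_apply] at h00 h10 h20 h30 h40
    linear_combination (-5/12 : ℂ) * h00 + (3/2 : ℂ) * h10 + (-2 : ℂ) * h20 + (7/6 : ℂ) * h30 + (-1/4 : ℂ) * h40
  · intro a b c
    have h00 := hC a b c 0 0
    have h01 := hC a b c 0 1
    have h02 := hC a b c 0 2
    have h03 := hC a b c 0 3
    have h04 := hC a b c 0 4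
    have h10 := hC a b c 1 0
    have h11 := hC a b c 1 1
    have h12 := hC a b c 1 2
    have h13 := hC a b c 1 3
    have h14 := hC a b c 1 4
    have h20 := hC a b c 2 0
    have h21 := hC a b c 2 1
    have h22 := hC a b c 2 2
    have h23 := hC a b c 2 3
    have h24 := hC a b c 2 4
    have h30 := hC a b c 3 0
    have h31 := hC a b c 3 1
    have h32 := hC a b c 3 2
    have h33 := hC a b c 3 3
    have h34 := hC a b c 3 4
    have h40 := hC a b c 4 0
    have h41 := hC a b c 4 1
    have h42 := hC a b c 4 2
    have h43 := hC a b c 4 3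
    have h44 := hC a b c 4 4
    simp only [cocPoly, map_add, LinearMap.add_apply] at h00 h01 h02 h03 h04 h10 h11 h12 h13 h14 h20 h21 h22 h23 h24 h30 h31 h32 h33 h34 h40 h41 h42 h43 h44 ⊢
    linear_combination (-875/288 : ℂ) * h00 + (35/6 : ℂ) * h01 + (-35/8 : ℂ) * h02 + (35/18 : ℂ) * h03 + (-35/96 : ℂ) * h04 + (325/36 : ℂ) * h10 + (-52/3 : ℂ) * h11 + (13 : ℂ) * h12 + (-52/9 : ℂ) * h13 + (13/12 : ℂ) * h14 + (-475/48 : ℂ) * h20 + (19 : ℂ) * h21 + (-57/4 : ℂ) * h22 + (19/3 : ℂ) * h23 + (-19/16 : ℂ) * h24 + (175/36 : ℂ) * h30 + (-28/3 : ℂ) * h31 + (7 : ℂ) * h32 + (-28/9 : ℂ) * h33 + (7/12 : ℂ) * h34 + (-275/288 : ℂ) * h40 + (11/6 : ℂ) * h41 + (-11/8 : ℂ) * h42 + (11/18 : ℂ) * h43 + (-11/96 : ℂ) * h44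
  · intro a b c
    have h00 := hC a b c 0 0
    have h10 := hC a b c 1 0
    have h20 := hC a b c 2 0
    have h30 := hC a b c 3 0
    have h40 := hC a b c 4 0
    simp only [cocPoly, map_add, LinearMap.add_apply] at h00 h10 h20 h30 h40
    linear_combination (35/24 : ℂ) * h00 + (-13/3 : ℂ) * h10 + (19/4 : ℂ) * h20 + (-7/3 : ℂ) * h30 + (11/24 : ℂ) * h40
  · intro a b c
    have h00 := hC a b c 0 0
    have h01 := hC a b c 0 1
    have h02 := hC a b c 0 2
    have h03 := hC a b c 0 3
    have h04 := hC a b c 0 4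
    have h10 := hC a b c 1 0
    have h11 := hC a b c 1 1
    have h12 := hC a b c 1 2
    have h13 := hC a b c 1 3
    have h14 := hC a b c 1 4
    have h20 := hC a b c 2 0
    have h21 := hC a b c 2 1
    have h22 := hC a b c 2 2
    have h23 := hC a b c 2 3
    have h24 := hC a b c 2 4
    have h30 := hC a b c 3 0
    have h31 := hC a b c 3 1
    have h32 := hC a b c 3 2
    have h33 := hC a b c 3 3
    have h34 := hC a b c 3 4
    have h40 := hC a b c 4 0
    have h41 := hC a b c 4 1
    have h42 := hC a b c 4 2
    have h43 := hC a b c 4 3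
    have h44 := hC a b c 4 4
    simp only [cocPoly, map_add, LinearMap.add_apply] at h00 h01 h02 h03 h04 h10 h11 h12 h13 h14 h20 h21 h22 h23 h24 h30 h31 h32 h33 h34 h40 h41 h42 h43 h44 ⊢
    linear_combination (625/144 : ℂ) * h00 + (-25/3 : ℂ) * h01 + (25/4 : ℂ) * h02 + (-25/9 : ℂ) * h03 + (25/48 : ℂ) * h04 + (-25/3 : ℂ) * h10 + (16 : ℂ) * h11 + (-12 : ℂ) * h12 + (16/3 : ℂ) * h13 + (-1 : ℂ) * h14 + (25/4 : ℂ) * h20 + (-12 : ℂ) * h21 + (9 : ℂ) * h22 + (-4 : ℂ) * h23 + (3/4 : ℂ) * h24 + (-25/9 : ℂ) * h30 + (16/3 : ℂ) * h31 + (-4 : ℂ) * h32 + (16/9 : ℂ) * h33 + (-1/3 : ℂ) * h34 + (25/48 : ℂ) * h40 + (-1 : ℂ) * h41 + (3/4 : ℂ) * h42 + (-1/3 : ℂ) * h43 + (1/16 : ℂ) * h44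
  · intro a b c
    have h00 := hC a b c 0 0
    have h10 := hC a b c 1 0
    have h20 := hC a b c 2 0
    have h30 := hC a b c 3 0
    have h40 := hC a b c 4 0
    simp only [cocPoly, map_add, LinearMap.add_apply] at h00 h10 h20 h30 h40 ⊢
    linear_combination (-25/12 : ℂ) * h00 + (4 : ℂ) * h10 + (-3 : ℂ) * h20 + (4/3 : ℂ) * h30 + (-1/4 : ℂ) * h40
  · intro a b c
    have h00 := hC a b c 0 0
    simp only [cocPoly, map_add, LinearMap.add_apply] at h00 ⊢
    linear_combination (1 : ℂ) * h00
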